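/- arXiv:1810.07039 — 2 statements merged into one kernel-verified Lean document; each statement's English description precedes it below -/
import Mathlib

section
/- Let G and G' be discrete groups acting on topological spaces Y and Y' respectively, let φ : G → G' be an injective group homomorphism and f : Y → Y' a continuous φ-equivariant map. If f is an open embedding and the induced map of quotient sets Y/G → Y'/G' is injective with the property that stabilizers map bijectively (i.e., the induced functor of action groupoids is fully faithful on underlying sets), then the induced map Y ×_G G' → Y' is an open embedding, where Y ×_G G' = (Y × G')/G with G acting by g·(y, g') = (g·y, g'φ(g)⁻¹). -/
open Topology

variable {G G' Y Y' : Type*} [Group G] [Group G']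
  [TopologicalSpace Y] [TopologicalSpace Y'] [MulAction G Y] [MulAction G' Y']

/-- The balanced product `Y ×_G G'`: the quotient of `Y × G'` by the `G`-action
`g • (y, g') = (g • y, g' * φ(g)⁻¹)`, with the quotient topology. -/
abbrev BalancedProd (φ : G →* G') (Y : Type*) [TopologicalSpace Y] [MulAction G Y] :
    Type _ :=
  Quot (fun p q : Y × G' => ∃ g : G, q.1 = g • p.1 ∧ q.2 = p.2 * (φ g)⁻¹)

/-- The natural map `Y ×_G G' → Y'`, `(y, g') ↦ g' • f(y)`. -/
def balancedMap (φ : G →* G') (f : Y → Y')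
    (hequiv : ∀ (g : G) (y : Y), f (g • y) = φ g • f y) :
    BalancedProd φ Y → Y' :=
  Quot.lift (fun p => p.2 • f p.1)
    (by
      rintro ⟨y, g'⟩ ⟨y₂, g₂⟩ ⟨g, rfl, rfl⟩
      simp [hequiv, mul_smul])

/-- Proposition 2.5 of the paper: `G, G'` discrete groups acting continuously on `Y, Y'`,
`φ : G → G'` an injective homomorphism, `f : Y → Y'` a continuous `φ`-equivariant open
embedding such that the induced functor of action groupoids is fully faithful (for all
`y, y'`, the map `{g : G | g • y = y'} → {g' : G' | g' • f y = f y'}`, `g ↦ φ g`, is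
bijective).  Then the induced map `Y ×_G G' → Y'` is an open embedding (where `G'` carries
the discrete topology and `Y ×_G G'` the quotient topology). -/
theorem stmt_14 [TopologicalSpace G'] [DiscreteTopology G']
    (φ : G →* G') (f : Y → Y')
    (hφ : Function.Injective φ)
    (hf : Continuous f)
    (hequiv : ∀ (g : G) (y : Y), f (g • y) = φ g • f y)
    (hGcont : ∀ g : G, Continuous (fun y : Y => g • y))
    (hG'cont : ∀ g' : G', Continuous (fun y : Y' => g' • y))
    (hopen : IsOpenEmbedding f)
    (hff : ∀ y y' : Y,
      Function.Bijective (fun k : {g : G // g • y = y'} =>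
        (⟨φ k.1, by rw [← hequiv, k.2]⟩ : {g' : G' // g' • f y = f y'}))) :
    IsOpenEmbedding (balancedMap φ f hequiv) := by
  haveI : ContinuousConstSMul G' Y' := ⟨hG'cont⟩
  set m : Y × G' → Y' := fun p => p.2 • f p.1 with hm_def
  -- continuity of the map on the total space
  have hm : Continuous m := by
    rw [continuous_iff_continuousAt]
    rintro ⟨y, g'⟩
    have : ContinuousAt (fun y : Y => g' • f y) y :=
      ((hG'cont g').comp hf).continuousAt
    have hfst : ContinuousAt (fun p : Y × G' => p.1) (y, g') := continuousAt_fst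
    have hval : ∀ᶠ p : Y × G' in 𝓝 (y, g'), p.2 = g' := by
      have : {p : Y × G' | p.2 = g'} ∈ 𝓝 (y, g') := by
        apply IsOpen.mem_nhds
        · exact (isOpen_discrete {g'}).preimage continuous_snd
        · rfl
      exact this
    have := (this.comp hfst)
    refine ContinuousAt.congr this ?_
    filter_upwards [hval] with p hp
    simp [m, hp]
  -- continuity of the induced map
  have hFcont : Continuous (balancedMap φ f hequiv) := by
    rw [continuous_coinduced_dom]
    exact hm
  -- each slice map is open
  have hslice : ∀ g' : G', IsOpenMap (fun y : Y => g' • f y) := by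
    intro g'
    exact (Homeomorph.smul g' (α := Y')).isOpenMap.comp hopen.isOpenMap
  -- m is an open map
  have hmopen : IsOpenMap m := by
    intro W hW
    have : m '' W = ⋃ g' : G', (fun y : Y => g' • f y) '' {y : Y | (y, g') ∈ W} := by
      ext y'
      simp only [Set.mem_image, Set.mem_iUnion, Set.mem_setOf_eq]
      constructor
      · rintro ⟨⟨y, g'⟩, hp, rfl⟩
        exact ⟨g', y, hp, rfl⟩
      · rintro ⟨g', y, hy, rfl⟩
        exact ⟨(y, g'), hy, rfl⟩
    rw [this]
    refine isOpen_iUnion fun g' => hslice g' _ ?_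
    exact hW.preimage (Continuous.prodMk continuous_id continuous_const)
  -- the induced map is open
  have hFopen : IsOpenMap (balancedMap φ f hequiv) := by
    intro U hU
    have himg : balancedMap φ f hequiv '' U = m '' (Quot.mk _ ⁻¹' U) := by
      ext y'
      constructor
      · rintro ⟨q, hq, rfl⟩
        obtain ⟨p, rfl⟩ := Quot.exists_rep q
        exact ⟨p, hq, rfl⟩
      · rintro ⟨p, hp, rfl⟩
        exact ⟨Quot.mk _ p, hp, rfl⟩
    rw [himg]
    exact hmopen _ hU
  -- injectivity
  have hFinj : Function.Injective (balancedMap φ f hequiv) := by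
    intro a b
    induction a using Quot.ind with
    | _ p =>
    induction b using Quot.ind with
    | _ q =>
    obtain ⟨y₁, g₁'⟩ := p
    obtain ⟨y₂, g₂'⟩ := q
    intro h
    have h' : (g₂'⁻¹ * g₁') • f y₁ = f y₂ := by
      have : g₁' • f y₁ = g₂' • f y₂ := h
      rw [mul_smul, this, inv_smul_smul]
    obtain ⟨⟨g, hg⟩, hg'⟩ := (hff y₁ y₂).2 ⟨g₂'⁻¹ * g₁', h'⟩
    have hφg : φ g = g₂'⁻¹ * g₁' := congrArg Subtype.val hg'
    apply Quot.sound
    refine ⟨g, hg.symm, ?_⟩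
    rw [hφg]
    group
  exact IsOpenEmbedding.of_continuous_injective_isOpenMap hFcont hFinj hFopen
end

section
/- Let W be the (2,3,∞) triangle group ⟨a, b, c | a² = b² = c² = (ab)² = (bc)³ = 1⟩, and let W_I = ⟨a, b⟩ ≅ Z/2 × Z/2 be the parabolic subgroup. Then for every nontrivial element w ∈ {a, b, ab} of W_I, C_W(w) ⊆ ⟨a, b⟩, i.e. C_W(w) = C_{W_I}(w). -/
/-- The relations of the `(2,3,∞)` triangle group
`⟨a, b, c | a² = b² = c² = (ab)² = (bc)³ = 1⟩`, with `a = 0`, `b = 1`, `c = 2`. -/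
def triangleRels : Set (FreeGroup (Fin 3)) :=
  {x | (∃ i, x = FreeGroup.of i ^ 2) ∨
    x = (FreeGroup.of 0 * FreeGroup.of 1) ^ 2 ∨
    x = (FreeGroup.of 1 * FreeGroup.of 2) ^ 3}

/-- The `(2,3,∞)` triangle group. -/
abbrev Triangle23Inf := PresentedGroup triangleRels

open Monoid PushoutI
namespace T23
abbrev Kl := Multiplicative (ZMod 2 × ZMod 2)
abbrev D3 := DihedralGroup 3
abbrev Hb := Multiplicative (ZMod 2)
@[reducible] def Gf : Bool → Type := fun b => bif b then D3 else Kl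
instance instGroupGf : (i : Bool) → Group (Gf i) := fun i =>
  Bool.rec (inferInstanceAs (Group Kl)) (inferInstanceAs (Group D3)) i
def phiK : Hb →* Kl := MonoidHom.mk' (fun x => Multiplicative.ofAdd (0, x.toAdd)) (by decide)
def phiD : Hb →* D3 := MonoidHom.mk' (fun x => if x.toAdd = 1 then DihedralGroup.sr 0 else 1)
  (by decide)
def phim : ∀ i, Hb →* Gf i := fun i => Bool.rec phiK phiD i
lemma hphi : ∀ i, Function.Injective (phim i) := by
  intro i
  cases i
  · show Function.Injective phiK; decide
  · show Function.Injective phiD; decide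
abbrev P := PushoutI phim

instance : ∀ i, DecidableEq (Gf i) := fun i =>
  Bool.rec (inferInstanceAs (DecidableEq Kl)) (inferInstanceAs (DecidableEq D3)) i

/-! ### Words -/

abbrev Letter := (Σ i, Gf i)

def lp (l : List Letter) : P := (l.map fun p => of (φ := phim) p.1 p.2).prod

def Red (l : List Letter) : Prop := ∀ p ∈ l, p.2 ∉ (phim p.1).range
def Alt (l : List Letter) : Prop := l.Chain' fun p q => p.1 ≠ q.1

@[simp] lemma lp_nil : lp [] = 1 := rfl
@[simp] lemma lp_cons (p : Letter) (l : List Letter) :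
    lp (p :: l) = of (φ := phim) p.1 p.2 * lp l := by
  simp [lp]
@[simp] lemma lp_append (l₁ l₂ : List Letter) : lp (l₁ ++ l₂) = lp l₁ * lp l₂ := by
  simp [lp]
@[simp] lemma lp_singleton (p : Letter) : lp [p] = of (φ := phim) p.1 p.2 := by
  simp [lp]

/-- reverse-inverse of a word -/
def ri (l : List Letter) : List Letter := (l.map fun p => ⟨p.1, p.2⁻¹⟩).reverse

@[simp] lemma lp_ri (l : List Letter) : lp (ri l) = (lp l)⁻¹ := by
  induction l with
  | nil => simp [ri]
  | cons p t ih =>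
      rw [ri] at ih ⊢
      simp only [List.map_cons, List.reverse_cons, lp_cons]
      rw [lp_append, ih, lp_singleton, map_inv, mul_inv_rev]

lemma Red.ri {l : List Letter} (h : Red l) : Red (T23.ri l) := by
  intro p hp
  rw [T23.ri, List.mem_reverse, List.mem_map] at hp
  obtain ⟨q, hq, rfl⟩ := hp
  simpa using fun hmem => h q hq ((phim q.1).range.inv_mem_iff.mp hmem)

lemma Alt.ri {l : List Letter} (h : Alt l) : Alt (T23.ri l) := by
  rw [T23.ri, Alt, List.Chain', List.isChain_reverse, List.isChain_map]
  exact h.imp fun a b hab => Ne.symm hab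

@[simp] lemma head?_ri (l : List Letter) :
    (ri l).head? = l.getLast?.map fun p => (⟨p.1, p.2⁻¹⟩ : Letter) := by
  rw [ri, List.head?_reverse, List.getLast?_map]

/-- The key consequence of the normal form theorem: a nonempty reduced alternating word
cannot multiply to an element of the image of the base group. -/
lemma eq_nil_of_lp_mem (l : List Letter) (hred : Red l) (halt : Alt l)
    (hmem : lp l ∈ (base phim).range) : l = [] := by
  classical
  have hne : ∀ p ∈ l, Sigma.snd p ≠ 1 := by
    intro p hp h1
    exact hred p hp (h1 ▸ (phim p.1).range.one_mem)
  let w : CoprodI.Word Gf := ⟨l, hne, halt⟩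
  have hw : Reduced phim w := fun p hp => hred p hp
  have hprod : ofCoprodI (w.prod) = lp l := by
    rw [CoprodI.Word.prod, map_list_prod, List.map_map, lp]
    exact congrArg List.prod (List.map_congr_left fun p _ => ofCoprodI_of p.1 p.2)
  have := hw.eq_empty_of_mem_range hphi (by rw [hprod]; exact hmem)
  have : w.toList = ([] : List Letter) := by rw [this]; rfl
  exact this

/-- Every element of the pushout has a normal form `base h * lp l`. -/
lemma exists_rep (g : P) : ∃ (h : Hb) (l : List Letter),
    Red l ∧ Alt l ∧ g = base phim h * lp l := by
  classical
  obtain ⟨d⟩ := NormalWord.transversal_nonempty phim hphi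
  set w : NormalWord d := NormalWord.equiv g with hw
  have hg : g = w.prod := (NormalWord.equiv.symm_apply_apply g).symm
  refine ⟨w.head, w.toList, ?_, w.chain_ne, ?_⟩
  · intro p hp hrange
    have hset : p.2 ∈ d.set p.1 := w.normalized p.1 p.2 (by simpa using hp)
    have hone : p.2 ≠ 1 := w.ne_one p hp
    -- from IsComplement, p.2 ∈ range ∩ set ⟹ p.2 = 1
    have hcompl := d.compl p.1
    have h1 := hcompl.existsUnique p.2
    obtain ⟨x, -, hx⟩ := h1
    have e1 : ((⟨⟨p.2, hrange⟩, ⟨1, d.one_mem p.1⟩⟩ : (phim p.1).range × d.set p.1)) =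
        (⟨⟨1, (phim p.1).range.one_mem⟩, ⟨p.2, hset⟩⟩ : (phim p.1).range × d.set p.1) :=
      (hx _ (by simp)).trans (hx _ (by simp)).symm
    exact hone (congrArg (fun z => (z.1 : Gf p.1)) e1)
  · rw [hg, NormalWord.prod]
    congr 1
    rw [CoprodI.Word.prod, map_list_prod, List.map_map, lp]
    exact congrArg List.prod (List.map_congr_left fun p _ => ofCoprodI_of p.1 p.2)

/-! ### Core centralizer lemmas -/

def h0 : Hb := Multiplicative.ofAdd 1

lemma of_false_comm (u v : Kl) :
    of (φ := phim) false u * of (φ := phim) false v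
      = of (φ := phim) false v * of (φ := phim) false u := by
  rw [← map_mul, ← map_mul]
  exact congrArg (of (φ := phim) false) (mul_comm u v)

lemma base_eq_of_false (h : Hb) : base phim h = of (φ := phim) false (phiK h) :=
  (of_apply_eq_base phim false h).symm

/-- Centralizer of `of false x` for `x` outside the base: peel-and-contradict. -/
lemma aux1 (x : Kl) (hx : x ∉ (phim false).range) :
    ∀ n (l : List Letter), l.length ≤ n → Red l → Alt l →
      lp l * of (φ := phim) false x = of (φ := phim) false x * lp l →
      lp l ∈ (of (φ := phim) false).range := by
  intro n
  induction n with
  | zero =>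
    intro l hl _ _ _
    rw [List.length_eq_zero_iff.mp (Nat.le_zero.mp hl), lp_nil]
    exact Subgroup.one_mem _
  | succ n ih =>
    intro l hl hred halt hcomm
    match l, hl, hred, halt, hcomm with
    | [], _, _, _, _ => rw [lp_nil]; exact Subgroup.one_mem _
    | (⟨false, gq⟩ :: t₂), hl, hred, halt, hcomm =>
      -- peel from the front
      have hq : of (φ := phim) false gq * of (φ := phim) false x
          = of (φ := phim) false x * of (φ := phim) false gq := of_false_comm _ _
      rw [lp_cons] at hcomm
      dsimp only at hcomm
      have hcomm₂ : lp t₂ * of (φ := phim) false x = of (φ := phim) false x * lp t₂ := by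
        apply mul_left_cancel (a := of (φ := phim) false gq)
        rw [← mul_assoc, hcomm, ← mul_assoc, ← hq, mul_assoc]
      have ht₂ := ih t₂ (Nat.le_of_succ_le_succ hl)
        (fun r hr => hred r (List.mem_cons_of_mem _ hr)) halt.tail hcomm₂
      rw [lp_cons]
      exact Subgroup.mul_mem _ ⟨gq, rfl⟩ ht₂
    | (⟨true, gq⟩ :: t₂), hl, hred, halt, hcomm =>
      -- decompose from the back
      rcases (⟨true, gq⟩ :: t₂ : List Letter).eq_nil_or_concat' with hnil | ⟨t, p, hconcat⟩
      · simp at hnil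
      obtain ⟨i, g⟩ := p
      rw [hconcat] at hred halt hcomm ⊢
      have hlen : t.length ≤ n := by
        have := congrArg List.length hconcat
        simp only [List.length_cons, List.length_append, List.length_singleton] at this hl
        omega
      have hredt : Red t := fun r hr => hred r (List.mem_append_left _ hr)
      obtain ⟨haltt, -, hlast⟩ := List.isChain_append.mp halt
      cases i with
      | false =>
        -- peel from the back
        have hp : of (φ := phim) false g * of (φ := phim) false x
            = of (φ := phim) false x * of (φ := phim) false g := of_false_comm _ _
        rw [lp_append, lp_singleton] at hcomm
        dsimp only at hcomm
        have hcomm₂ : lp t * of (φ := phim) false x = of (φ := phim) false x * lp t := by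
          apply mul_right_cancel (b := of (φ := phim) false g)
          rw [mul_assoc, ← hp, ← mul_assoc, hcomm, ← mul_assoc]
        have ht := ih t hlen hredt haltt hcomm₂
        rw [lp_append, lp_singleton]
        exact Subgroup.mul_mem _ ht ⟨g, rfl⟩
      | true =>
        -- contradiction: both ends have index `true`
        exfalso
        have hhead : (t ++ [(⟨true, g⟩ : Letter)]).head? = some ⟨true, gq⟩ := by
          rw [← hconcat]; rfl
        set l' : List Letter := t ++ [⟨true, g⟩] with hl'def
        set L : List Letter := ⟨false, x⁻¹⟩ :: (l' ++ (⟨false, x⟩ :: ri l')) with hLdef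
        have hredL : Red L := by
          intro r hr
          rcases List.mem_cons.mp hr with rfl | hr
          · simpa using fun hmem => hx ((phim false).range.inv_mem_iff.mp hmem)
          rcases List.mem_append.mp hr with hr | hr
          · exact hred r hr
          rcases List.mem_cons.mp hr with rfl | hr
          · exact hx
          · exact hred.ri r hr
        have haltL : Alt L := by
          rw [hLdef, Alt, List.Chain', List.isChain_cons]
          refine ⟨?_, ?_⟩
          · intro y hy
            rw [List.head?_append, hhead] at hy
            simp only [Option.some_or] at hy
            cases hy
            simp
          rw [List.isChain_append]
          refine ⟨halt, ?_, ?_⟩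
          · rw [List.isChain_cons]
            refine ⟨?_, Alt.ri halt⟩
            intro y hy
            rw [head?_ri, List.getLast?_concat] at hy
            cases hy
            simp
          · intro r hr y hy
            rw [List.getLast?_concat] at hr
            cases hr
            cases hy
            simp
        have hlpL : lp L = (of (φ := phim) false x)⁻¹ *
            (lp l' * of (φ := phim) false x) * (lp l')⁻¹ := by
          rw [hLdef, lp_cons, lp_append, lp_cons, lp_ri]
          simp [mul_assoc]
          exact map_inv _ x
        have h1 : lp L = 1 := by
          rw [hlpL, hcomm, ← mul_assoc, inv_mul_cancel, one_mul, mul_inv_cancel]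
        have := eq_nil_of_lp_mem L hredL haltL (h1 ▸ Subgroup.one_mem _)
        rw [hLdef] at this
        simp at this

/-! ### The base-element case -/

lemma mem_range_phiD (s : D3) :
    s ∈ (phim true).range ↔ s = 1 ∨ s = DihedralGroup.sr 0 := by
  constructor
  · rintro ⟨y, rfl⟩
    have : ∀ y : Hb, phiD y = 1 ∨ phiD y = DihedralGroup.sr 0 := by decide
    exact this y
  · rintro (rfl | rfl)
    · exact ⟨1, map_one _⟩
    · exact ⟨h0, rfl⟩

lemma d3_fact (s : Gf true) (hs : s ∉ (phim true).range) :
    (phim true h0 * s * (phim true h0)⁻¹) * s⁻¹ ∉ (phim true).range := by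
  rw [mem_range_phiD] at hs ⊢
  revert hs
  have : ∀ s : D3, ¬(s = 1 ∨ s = DihedralGroup.sr 0) →
      ¬((phiD h0 * s * (phiD h0)⁻¹) * s⁻¹ = 1 ∨
        (phiD h0 * s * (phiD h0)⁻¹) * s⁻¹ = DihedralGroup.sr 0) := by decide
  exact this s

def cnj (l : List Letter) : List Letter :=
  l.map fun q => ⟨q.1, phim q.1 h0 * q.2 * (phim q.1 h0)⁻¹⟩

@[simp] lemma lp_cnj (l : List Letter) :
    lp (cnj l) = base phim h0 * lp l * (base phim h0)⁻¹ := by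
  induction l with
  | nil => simp [cnj]
  | cons q t ih =>
    rw [cnj, List.map_cons, lp_cons, lp_cons]
    rw [cnj] at ih
    dsimp only
    rw [map_mul, map_mul, map_inv, of_apply_eq_base, ih]
    group

lemma Red.cnj {l : List Letter} (h : Red l) : Red (T23.cnj l) := by
  intro r hr
  rw [T23.cnj, List.mem_map] at hr
  obtain ⟨q, hq, rfl⟩ := hr
  intro hmem
  refine h q hq ?_
  have h1 : phim q.1 h0 ∈ (phim q.1).range := ⟨h0, rfl⟩
  have := Subgroup.mul_mem _ (Subgroup.mul_mem _ ((phim q.1).range.inv_mem h1) hmem) h1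
  simpa [mul_assoc] using this

lemma Alt.cnj {l : List Letter} (h : Alt l) : Alt (T23.cnj l) := by
  rw [T23.cnj, Alt, List.Chain', List.isChain_map]
  exact h.imp fun a b hab => hab

@[simp] lemma getLast?_cnj (l : List Letter) :
    (cnj l).getLast? = l.getLast?.map fun q => ⟨q.1, phim q.1 h0 * q.2 * (phim q.1 h0)⁻¹⟩ := by
  rw [cnj, List.getLast?_map]

/-- Centralizer of the base element: peel-and-contradict. -/
lemma aux2 : ∀ n (l : List Letter), l.length ≤ n → Red l → Alt l →
    lp l * base phim h0 = base phim h0 * lp l →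
    lp l ∈ (of (φ := phim) false).range := by
  intro n
  induction n with
  | zero =>
    intro l hl _ _ _
    rw [List.length_eq_zero_iff.mp (Nat.le_zero.mp hl), lp_nil]
    exact Subgroup.one_mem _
  | succ n ih =>
    intro l hl hred halt hcomm
    rcases l.eq_nil_or_concat' with rfl | ⟨t, p, hconcat⟩
    · rw [lp_nil]; exact Subgroup.one_mem _
    obtain ⟨i, g⟩ := p
    rw [hconcat] at hred halt hcomm ⊢
    have hlen : t.length ≤ n := by
      have := congrArg List.length hconcat
      simp only [List.length_cons, List.length_append, List.length_singleton] at this hl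
      omega
    have hredt : Red t := fun r hr => hred r (List.mem_append_left _ hr)
    obtain ⟨haltt, -, hlast⟩ := List.isChain_append.mp halt
    cases i with
    | false =>
      -- peel from the back
      have hp : of (φ := phim) false g * base phim h0 = base phim h0 * of (φ := phim) false g := by
        rw [base_eq_of_false]; exact of_false_comm _ _
      rw [lp_append, lp_singleton] at hcomm
      dsimp only at hcomm
      have hcomm₂ : lp t * base phim h0 = base phim h0 * lp t := by
        apply mul_right_cancel (b := of (φ := phim) false g)
        rw [mul_assoc, ← hp, ← mul_assoc, hcomm, ← mul_assoc]
      have ht := ih t hlen hredt haltt hcomm₂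
      rw [lp_append, lp_singleton]
      exact Subgroup.mul_mem _ ht ⟨g, rfl⟩
    | true =>
      exfalso
      have hgmem : (⟨true, g⟩ : Letter) ∈ t ++ [(⟨true, g⟩ : Letter)] :=
        List.mem_append_right _ (List.mem_singleton_self _)
      have hgr : g ∉ (phim true).range := hred _ hgmem
      set L : List Letter := cnj t ++
        ((⟨true, (phim true h0 * g * (phim true h0)⁻¹) * g⁻¹⟩ : Letter) :: ri t) with hLdef
      have hredL : Red L := by
        intro r hr
        rcases List.mem_append.mp hr with hr | hr
        · exact hredt.cnj r hr
        rcases List.mem_cons.mp hr with rfl | hr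
        · exact d3_fact g hgr
        · exact hredt.ri r hr
      have haltL : Alt L := by
        rw [hLdef, Alt, List.Chain', List.isChain_append]
        refine ⟨Alt.cnj haltt, ?_, ?_⟩
        · rw [List.isChain_cons]
          refine ⟨?_, Alt.ri haltt⟩
          intro y hy
          rw [head?_ri] at hy
          rcases ht' : t.getLast? with - | r
          · rw [ht'] at hy; cases hy
          · rw [ht'] at hy
            cases hy
            exact fun hfst => (hlast r (by rw [ht']; rfl) ⟨true, g⟩ rfl) hfst.symm
        · intro r hr y hy
          rw [getLast?_cnj] at hr
          rcases ht' : t.getLast? with - | r'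
          · rw [ht'] at hr; cases hr
          · rw [ht'] at hr
            cases hr
            cases hy
            exact hlast r' (by rw [ht']; rfl) ⟨true, g⟩ rfl
      have hlpL : lp L = base phim h0 * lp (t ++ [(⟨true, g⟩ : Letter)]) * (base phim h0)⁻¹ *
          (lp (t ++ [(⟨true, g⟩ : Letter)]))⁻¹ := by
        rw [hLdef, lp_append, lp_cons, lp_ri, lp_cnj, lp_append, lp_singleton]
        dsimp only
        rw [map_mul, map_mul, map_mul, map_inv, map_inv, of_apply_eq_base]
        group
      have h1 : lp L = 1 := by
        rw [hlpL, ← hcomm, mul_assoc (lp (t ++ [(⟨true, g⟩ : Letter)]))]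
        rw [mul_inv_cancel, mul_one, mul_inv_cancel]
      have := eq_nil_of_lp_mem L hredL haltL (h1 ▸ Subgroup.one_mem _)
      rw [hLdef] at this
      simp at this

/-- Combined core lemma: anything commuting with a nontrivial element of the
Klein four factor lies in the image of the Klein four factor. -/
lemma core (v : Kl) (hv : v ≠ 1) (p : P)
    (hcomm : p * of (φ := phim) false v = of (φ := phim) false v * p) :
    p ∈ (of (φ := phim) false).range := by
  obtain ⟨h, l, hred, halt, rfl⟩ := exists_rep p
  have hbmem : base phim h ∈ (of (φ := phim) false).range :=
    ⟨phiK h, of_apply_eq_base phim false h⟩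
  have hb : base phim h * of (φ := phim) false v
      = of (φ := phim) false v * base phim h := by
    rw [base_eq_of_false]; exact of_false_comm _ _
  have hcomm' : lp l * of (φ := phim) false v = of (φ := phim) false v * lp l := by
    apply mul_left_cancel (a := base phim h)
    rw [← mul_assoc, hcomm, ← mul_assoc, ← hb, mul_assoc]
  by_cases hv2 : v ∈ (phim false).range
  · obtain ⟨y, rfl⟩ := hv2
    have hy : y = h0 := by
      have : ∀ y : Hb, phim false y ≠ 1 → y = h0 := by decide
      exact this y hv
    subst hy
    rw [of_apply_eq_base] at hcomm'
    exact Subgroup.mul_mem _ hbmem (aux2 l.length l le_rfl hred halt hcomm')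
  · exact Subgroup.mul_mem _ hbmem (aux1 v hv2 l.length l le_rfl hred halt hcomm')

/-! ### The triangle group side -/

abbrev W := Triangle23Inf

def wa : W := PresentedGroup.of 0
def wb : W := PresentedGroup.of 1
def wc : W := PresentedGroup.of 2

lemma mk_rel {r : FreeGroup (Fin 3)} (hr : r ∈ triangleRels) :
    PresentedGroup.mk triangleRels r = 1 :=
  (QuotientGroup.eq_one_iff _).mpr (Subgroup.subset_normalClosure hr)

lemma of_eq_mk (i : Fin 3) :
    (PresentedGroup.of i : W) = PresentedGroup.mk triangleRels (FreeGroup.of i) := rfl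

lemma sq (i : Fin 3) : (PresentedGroup.of (rels := triangleRels) i) ^ 2 = 1 := by
  rw [of_eq_mk, ← map_pow]
  exact mk_rel (Or.inl ⟨i, rfl⟩)

lemma mul_self_gen (i : Fin 3) :
    (PresentedGroup.of (rels := triangleRels) i) * PresentedGroup.of i = 1 := by
  rw [← pow_two]; exact sq i

lemma inv_gen (i : Fin 3) :
    (PresentedGroup.of (rels := triangleRels) i)⁻¹ = PresentedGroup.of i :=
  inv_eq_of_mul_eq_one_right (mul_self_gen i)

lemma haa : wa * wa = 1 := mul_self_gen 0
lemma hbb : wb * wb = 1 := mul_self_gen 1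
lemma hcc : wc * wc = 1 := mul_self_gen 2
lemma hainv : wa⁻¹ = wa := inv_gen 0
lemma hbinv : wb⁻¹ = wb := inv_gen 1
lemma hcinv : wc⁻¹ = wc := inv_gen 2

lemma hab2 : (wa * wb) ^ 2 = 1 := by
  rw [wa, wb, of_eq_mk, of_eq_mk, ← map_mul, ← map_pow]
  exact mk_rel (Or.inr (Or.inl rfl))

lemma hbc3 : (wb * wc) ^ 3 = 1 := by
  rw [wb, wc, of_eq_mk, of_eq_mk, ← map_mul, ← map_pow]
  exact mk_rel (Or.inr (Or.inr rfl))

lemma comm_ab : wa * wb = wb * wa := by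
  have h : (wa * wb) * (wa * wb) = 1 := by rw [← pow_two]; exact hab2
  have h2 : (wa * wb)⁻¹ = wa * wb := inv_eq_of_mul_eq_one_right h
  calc wa * wb = (wa * wb)⁻¹ := h2.symm
    _ = wb⁻¹ * wa⁻¹ := mul_inv_rev _ _
    _ = wb * wa := by rw [hainv, hbinv]

/-- the rotation -/
def tr : W := wb * wc

lemma htr3 : tr * (tr * tr) = 1 := by
  have h := hbc3
  simp only [pow_succ, pow_zero, one_mul, mul_assoc] at h
  simpa only [tr, mul_assoc] using h

lemma htrinv : tr⁻¹ = tr * tr := inv_eq_of_mul_eq_one_right htr3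

lemma hconjbt : wb * tr * wb⁻¹ = tr⁻¹ := by
  rw [hbinv, tr]
  rw [show wb * (wb * wc) * wb = (wb * wb) * wc * wb from by group, hbb, one_mul]
  rw [mul_inv_rev, hbinv, hcinv]

def zeta : ZMod 3 →+ Additive W :=
  ZMod.lift 3 ⟨zmultiplesHom (Additive W) (Additive.ofMul tr), by
    rw [zmultiplesHom_apply]
    show ((3 : ℤ) • Additive.ofMul tr) = 0
    rw [← ofMul_zpow]
    rw [show tr ^ (3 : ℤ) = tr ^ (3 : ℕ) from zpow_natCast tr 3]
    rw [show tr ^ (3 : ℕ) = tr * (tr * tr) from by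
      rw [pow_succ, pow_succ, pow_one, mul_assoc], htr3]
    rfl⟩

def tz (i : ZMod 3) : W := Additive.toMul (zeta i)

lemma tz_add (i j : ZMod 3) : tz (i + j) = tz i * tz j :=
  congrArg Additive.toMul (zeta.map_add i j)

lemma tz_zero : tz 0 = 1 := congrArg Additive.toMul zeta.map_zero

lemma tz_one : tz 1 = tr := by
  show Additive.toMul (zeta 1) = tr
  rw [show (1 : ZMod 3) = ((1 : ℤ) : ZMod 3) from by decide, zeta, ZMod.lift_coe,
    zmultiplesHom_apply, one_zsmul]
  rfl

lemma tz_two : tz 2 = tr * tr := by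
  show Additive.toMul (zeta 2) = tr * tr
  rw [show (2 : ZMod 3) = ((2 : ℤ) : ZMod 3) from by decide, zeta, ZMod.lift_coe,
    zmultiplesHom_apply, two_zsmul]
  rfl

lemma hconj (i : ZMod 3) : wb * tz i * wb⁻¹ = tz (-i) := by
  have h3 : ∀ i : ZMod 3, i = 0 ∨ i = 1 ∨ i = 2 := by decide
  rcases h3 i with rfl | rfl | rfl
  · rw [neg_zero, tz_zero, mul_one, mul_inv_cancel]
  · rw [show (-1 : ZMod 3) = 2 from by decide, tz_one, tz_two, hconjbt, htrinv]
  · rw [show (-2 : ZMod 3) = 1 from by decide, tz_two, tz_one]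
    rw [show wb * (tr * tr) * wb⁻¹ = (wb * tr * wb⁻¹) * (wb * tr * wb⁻¹) from by group]
    rw [hconjbt, htrinv]
    rw [show (tr * tr) * (tr * tr) = tr * (tr * (tr * tr)) from by group, htr3, mul_one]

lemma hconj' (i : ZMod 3) : wb * tz i = tz (-i) * wb := by
  rw [← hconj i]; group

/-- the homomorphism from the dihedral group of order 6 -/
def kD : D3 →* W := MonoidHom.mk'
  (fun s => match s with
    | DihedralGroup.r i => tz i
    | DihedralGroup.sr i => wb * tz i)
  (by
    intro x y
    cases x with
    | r i =>
      cases y with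
      | r j => show tz (i + j) = tz i * tz j; exact tz_add i j
      | sr j =>
        show wb * tz (j - i) = tz i * (wb * tz j)
        rw [sub_eq_neg_add]
        rw [show tz i * (wb * tz j) = (tz i * wb) * tz j from (mul_assoc _ _ _).symm]
        have h := hconj' (-i)
        rw [neg_neg] at h
        rw [← h, mul_assoc, ← tz_add]
    | sr i =>
      cases y with
      | r j =>
        show wb * tz (i + j) = (wb * tz i) * tz j
        rw [tz_add, mul_assoc]
      | sr j =>
        show tz (j - i) = (wb * tz i) * (wb * tz j)
        rw [show wb * tz i = tz (-i) * wb from hconj' i]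
        rw [show (tz (-i) * wb) * (wb * tz j) = tz (-i) * ((wb * wb) * tz j) from by group]
        rw [hbb, one_mul, ← tz_add, sub_eq_neg_add])

/-- generic order-two homomorphism from `Multiplicative (ZMod 2)` -/
def chi2 (x : W) (hx : x * x = 1) : Multiplicative (ZMod 2) →* W :=
  MonoidHom.mk' (fun a => if Multiplicative.toAdd a = 1 then x else 1) (by
    intro a b
    have h2 : ∀ u : ZMod 2, u = 0 ∨ u = 1 := by decide
    show (if Multiplicative.toAdd (a * b) = 1 then x else 1) =
      (if Multiplicative.toAdd a = 1 then x else 1) *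
        (if Multiplicative.toAdd b = 1 then x else 1)
    have hab : Multiplicative.toAdd (a * b) = Multiplicative.toAdd a + Multiplicative.toAdd b :=
      rfl
    rcases h2 (Multiplicative.toAdd a) with h1 | h1 <;>
      rcases h2 (Multiplicative.toAdd b) with hb1 | hb1 <;>
      rw [hab, h1, hb1]
    · rw [if_neg (by decide : ¬((0 : ZMod 2) + 0 = 1)), if_neg (by decide : ¬((0 : ZMod 2) = 1)),
        one_mul]
    · rw [if_pos (by decide : ((0 : ZMod 2) + 1 = 1)), if_neg (by decide : ¬((0 : ZMod 2) = 1)),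
        if_pos rfl, one_mul]
    · rw [if_pos (by decide : ((1 : ZMod 2) + 0 = 1)), if_pos rfl,
        if_neg (by decide : ¬((0 : ZMod 2) = 1)), mul_one]
    · rw [if_neg (by decide : ¬((1 : ZMod 2) + 1 = 1)), if_pos rfl]
      exact hx.symm)

lemma chi2_gen (x : W) (hx : x * x = 1) : chi2 x hx (Multiplicative.ofAdd 1) = x := by
  show (if (1 : ZMod 2) = 1 then x else 1) = x
  rw [if_pos rfl]

lemma chi2_zero (x : W) (hx : x * x = 1) : chi2 x hx (Multiplicative.ofAdd 0) = 1 := by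
  show (if (0 : ZMod 2) = 1 then x else 1) = 1
  rw [if_neg (by decide)]

lemma chi2_commute : ∀ (m n : Multiplicative (ZMod 2)),
    Commute (chi2 wa haa m) (chi2 wb hbb n) := by
  intro m n
  have h2 : ∀ u : ZMod 2, u = 0 ∨ u = 1 := by decide
  show (if Multiplicative.toAdd m = 1 then wa else 1) *
      (if Multiplicative.toAdd n = 1 then wb else 1) =
    (if Multiplicative.toAdd n = 1 then wb else 1) *
      (if Multiplicative.toAdd m = 1 then wa else 1)
  rcases h2 (Multiplicative.toAdd m) with h1 | h1 <;>
    rcases h2 (Multiplicative.toAdd n) with hn1 | hn1 <;>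
    rw [h1, hn1]
  · simp only [if_neg (by decide : ¬((0 : ZMod 2) = 1)), one_mul, mul_one]
  · simp only [if_neg (by decide : ¬((0 : ZMod 2) = 1)), if_pos rfl, one_mul, mul_one]
  · simp only [if_neg (by decide : ¬((0 : ZMod 2) = 1)), if_pos rfl, one_mul, mul_one]
  · simp only [if_pos rfl]
    exact comm_ab

/-- the homomorphism from the Klein four group -/
def kK : Kl →* W :=
  (MonoidHom.noncommCoprod (chi2 wa haa) (chi2 wb hbb) chi2_commute).comp
    (MulEquiv.prodMultiplicative (ZMod 2) (ZMod 2)).toMonoidHom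

lemma kK_apply (x y : ZMod 2) :
    kK (Multiplicative.ofAdd (x, y)) =
      chi2 wa haa (Multiplicative.ofAdd x) * chi2 wb hbb (Multiplicative.ofAdd y) := rfl

/-- the homomorphism from the base group -/
def kH : Hb →* W := chi2 wb hbb

def kappa : ∀ i, Gf i →* W := fun i => Bool.rec kK kD i

lemma hcompat : ∀ i, (kappa i).comp (phim i) = kH := by
  intro i
  cases i
  · apply MonoidHom.ext
    intro h
    have h2 : ∀ u : Hb, u = Multiplicative.ofAdd 0 ∨ u = Multiplicative.ofAdd 1 := by decide
    rcases h2 h with rfl | rfl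
    · show kK (phiK (Multiplicative.ofAdd 0)) = kH (Multiplicative.ofAdd 0)
      rw [show phiK (Multiplicative.ofAdd 0) = Multiplicative.ofAdd ((0 : ZMod 2), (0 : ZMod 2))
        from by decide, kK_apply, chi2_zero, chi2_zero, one_mul, kH, chi2_zero]
    · show kK (phiK (Multiplicative.ofAdd 1)) = kH (Multiplicative.ofAdd 1)
      rw [show phiK (Multiplicative.ofAdd 1) = Multiplicative.ofAdd ((0 : ZMod 2), (1 : ZMod 2))
        from by decide, kK_apply, chi2_zero, chi2_gen, one_mul, kH, chi2_gen]
  · apply MonoidHom.ext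
    intro h
    have h2 : ∀ u : Hb, u = Multiplicative.ofAdd 0 ∨ u = Multiplicative.ofAdd 1 := by decide
    rcases h2 h with rfl | rfl
    · show kD (phiD (Multiplicative.ofAdd 0)) = kH (Multiplicative.ofAdd 0)
      rw [show phiD (Multiplicative.ofAdd 0) = DihedralGroup.r 0 from by decide]
      show tz 0 = kH (Multiplicative.ofAdd 0)
      rw [tz_zero, kH, chi2_zero]
    · show kD (phiD (Multiplicative.ofAdd 1)) = kH (Multiplicative.ofAdd 1)
      rw [show phiD (Multiplicative.ofAdd 1) = DihedralGroup.sr 0 from by decide]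
      show wb * tz 0 = kH (Multiplicative.ofAdd 1)
      rw [tz_zero, mul_one, kH, chi2_gen]

/-- The homomorphism from the pushout to the presented group. -/
def Psi : P →* W := lift kappa kH hcompat

/-! ### The homomorphism from the presented group to the pushout -/

def va : Kl := Multiplicative.ofAdd (1, 0)
def vb : Kl := Multiplicative.ofAdd (0, 1)
def sc : D3 := DihedralGroup.sr 1

def fPhi : Fin 3 → P := ![of (φ := phim) false va, of (φ := phim) false vb, of (φ := phim) true sc]

lemma of_false_vb : of (φ := phim) false vb = of (φ := phim) true (DihedralGroup.sr 0) := by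
  rw [show vb = phiK h0 from by decide]
  rw [show (DihedralGroup.sr 0 : D3) = phiD h0 from by decide]
  exact (of_apply_eq_base phim false h0).trans (of_apply_eq_base phim true h0).symm

lemma hrels : ∀ r ∈ triangleRels, FreeGroup.lift fPhi r = 1 := by
  rintro r (⟨i, rfl⟩ | rfl | rfl)
  · rw [map_pow, FreeGroup.lift_apply_of]
    fin_cases i
    · show (of (φ := phim) false va) ^ 2 = 1
      rw [← map_pow, show va ^ 2 = 1 from by decide, map_one]
    · show (of (φ := phim) false vb) ^ 2 = 1
      rw [← map_pow, show vb ^ 2 = 1 from by decide, map_one]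
    · show (of (φ := phim) true sc) ^ 2 = 1
      rw [← map_pow, show sc ^ 2 = 1 from by decide, map_one]
  · rw [map_pow, map_mul, FreeGroup.lift_apply_of, FreeGroup.lift_apply_of]
    show ((of (φ := phim) false va) * (of (φ := phim) false vb)) ^ 2 = 1
    rw [← map_mul, ← map_pow, show (va * vb) ^ 2 = 1 from by decide, map_one]
  · rw [map_pow, map_mul, FreeGroup.lift_apply_of, FreeGroup.lift_apply_of]
    show ((of (φ := phim) false vb) * (of (φ := phim) true sc)) ^ 3 = 1
    rw [of_false_vb, ← map_mul, ← map_pow,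
      show (DihedralGroup.sr 0 * sc) ^ 3 = 1 from by decide, map_one]

/-- The homomorphism from the presented group to the pushout. -/
def Phi : W →* P := PresentedGroup.toGroup hrels

lemma Phi_wa : Phi wa = of (φ := phim) false va := PresentedGroup.toGroup.of hrels
lemma Phi_wb : Phi wb = of (φ := phim) false vb := PresentedGroup.toGroup.of hrels
lemma Phi_wc : Phi wc = of (φ := phim) true sc := PresentedGroup.toGroup.of hrels

lemma kK_cases : ∀ u : Kl, kK u = 1 ∨ kK u = wa ∨ kK u = wb ∨ kK u = wa * wb := by
  intro u
  have h4 : ∀ u : Kl, u = Multiplicative.ofAdd (0, 0) ∨ u = Multiplicative.ofAdd (1, 0) ∨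
      u = Multiplicative.ofAdd (0, 1) ∨ u = Multiplicative.ofAdd (1, 1) := by decide
  rcases h4 u with rfl | rfl | rfl | rfl
  · left; rw [kK_apply, chi2_zero, chi2_zero, one_mul]
  · right; left; rw [kK_apply, chi2_gen, chi2_zero, mul_one]
  · right; right; left; rw [kK_apply, chi2_zero, chi2_gen, one_mul]
  · right; right; right; rw [kK_apply, chi2_gen, chi2_gen]

lemma PsiPhi : ∀ x : W, Psi (Phi x) = x := by
  have : Psi.comp Phi = MonoidHom.id W := by
    apply PresentedGroup.ext
    intro i
    fin_cases i
    · show Psi (Phi wa) = wa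
      rw [Phi_wa]
      show kK va = wa
      rw [va, kK_apply, chi2_gen, chi2_zero, mul_one]
    · show Psi (Phi wb) = wb
      rw [Phi_wb]
      show kK vb = wb
      rw [vb, kK_apply, chi2_zero, chi2_gen, one_mul]
    · show Psi (Phi wc) = wc
      rw [Phi_wc]
      show kD sc = wc
      show wb * tz 1 = wc
      rw [tz_one, tr, ← mul_assoc, hbb, one_mul]
  intro x
  exact DFunLike.congr_fun this x

lemma Phi_tz : ∀ i : ZMod 3, Phi (tz i) = of (φ := phim) true (DihedralGroup.r i) := by
  have key : Phi tr = of (φ := phim) true (DihedralGroup.r 1) := by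
    rw [tr, map_mul, Phi_wb, Phi_wc, of_false_vb, ← map_mul,
      show (DihedralGroup.sr 0 * sc : D3) = DihedralGroup.r 1 from by decide]
  intro i
  have h3 : ∀ i : ZMod 3, i = 0 ∨ i = 1 ∨ i = 2 := by decide
  rcases h3 i with rfl | rfl | rfl
  · rw [tz_zero, map_one, show (DihedralGroup.r 0 : D3) = 1 from rfl, map_one]
  · rw [tz_one, key]
  · rw [tz_two, map_mul, key, ← map_mul,
      show (DihedralGroup.r 1 * DihedralGroup.r 1 : D3) = DihedralGroup.r 2 from by decide]

lemma PhiPsi : ∀ x : P, Phi (Psi x) = x := by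
  have : Phi.comp Psi = MonoidHom.id P := by
    apply hom_ext_nonempty
    intro i
    cases i
    · apply MonoidHom.ext
      intro u
      show Phi (Psi (of (φ := phim) false u)) = of (φ := phim) false u
      rw [Psi, lift_of]
      show Phi (kK u) = of (φ := phim) false u
      have h4 : ∀ u : Kl, u = Multiplicative.ofAdd (0, 0) ∨ u = Multiplicative.ofAdd (1, 0) ∨
          u = Multiplicative.ofAdd (0, 1) ∨ u = Multiplicative.ofAdd (1, 1) := by decide
      rcases h4 u with rfl | rfl | rfl | rfl
      · rw [kK_apply, chi2_zero, chi2_zero, one_mul, map_one,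
          show (Multiplicative.ofAdd ((0 : ZMod 2), (0 : ZMod 2))) = (1 : Kl) from rfl, map_one]
      · rw [kK_apply, chi2_gen, chi2_zero, mul_one, Phi_wa, va]
      · rw [kK_apply, chi2_zero, chi2_gen, one_mul, Phi_wb, vb]
      · rw [kK_apply, chi2_gen, chi2_gen, map_mul, Phi_wa, Phi_wb, ← map_mul,
          show (va * vb : Kl) = Multiplicative.ofAdd (1, 1) from by decide]
    · apply MonoidHom.ext
      intro s
      show Phi (Psi (of (φ := phim) true s)) = of (φ := phim) true s
      rw [Psi, lift_of]
      show Phi (kD s) = of (φ := phim) true s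
      cases s with
      | r i =>
        show Phi (tz i) = _
        exact Phi_tz i
      | sr i =>
        show Phi (wb * tz i) = _
        rw [map_mul, Phi_wb, Phi_tz, of_false_vb, ← map_mul,
          show (DihedralGroup.sr 0 * DihedralGroup.r i : D3) = DihedralGroup.sr i from by
            rw [DihedralGroup.sr_mul_r, zero_add]]
  intro x
  exact DFunLike.congr_fun this x

end T23

/-- In the `(2,3,∞)` triangle group `W = ⟨a, b, c⟩`, for every nontrivial element `w` of
the parabolic subgroup `W_I = ⟨a, b⟩ ≅ Z/2 × Z/2`, the centralizer of `w` in `W` is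
contained in `W_I` (hence `C_W(w) = C_{W_I}(w)`). -/
theorem stmt_19 :
    ∀ w : Triangle23Inf,
      w ∈ Subgroup.closure {PresentedGroup.of (rels := triangleRels) 0,
        PresentedGroup.of (rels := triangleRels) 1} →
      w ≠ 1 →
      Subgroup.centralizer {w} ≤
        Subgroup.closure {PresentedGroup.of (rels := triangleRels) 0,
          PresentedGroup.of (rels := triangleRels) 1} := by
  intro w hw hw1 g hg
  rw [Subgroup.mem_centralizer_iff] at hg
  have hgw : w * g = g * w := hg w rfl
  -- map everything to the pushout
  have hwmem : T23.Phi w ∈ (of (φ := T23.phim) false).range := by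
    have hle : Subgroup.closure {PresentedGroup.of (rels := triangleRels) 0,
        PresentedGroup.of (rels := triangleRels) 1} ≤
        (of (φ := T23.phim) false).range.comap T23.Phi := by
      apply Subgroup.closure_le _ |>.mpr
      rintro x (rfl | rfl)
      · exact ⟨T23.va, T23.Phi_wa.symm⟩
      · exact ⟨T23.vb, T23.Phi_wb.symm⟩
    exact hle hw
  obtain ⟨v, hv⟩ := hwmem
  have hv1 : v ≠ 1 := by
    rintro rfl
    apply hw1
    rw [← T23.PsiPhi w, ← hv, map_one, map_one]
  have hcomm : T23.Phi g * of (φ := T23.phim) false v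
      = of (φ := T23.phim) false v * T23.Phi g := by
    rw [hv, ← map_mul, ← map_mul, hgw]
  obtain ⟨u, hu⟩ := T23.core v hv1 (T23.Phi g) hcomm
  have hgu : g = T23.kK u := by
    rw [← T23.PsiPhi g, ← hu]
    rfl
  rw [hgu]
  rcases T23.kK_cases u with h | h | h | h <;> rw [h]
  · exact Subgroup.one_mem _
  · exact Subgroup.subset_closure (Set.mem_insert _ _)
  · exact Subgroup.subset_closure (Set.mem_insert_of_mem _ rfl)
  · exact Subgroup.mul_mem _ (Subgroup.subset_closure (Set.mem_insert _ _))
      (Subgroup.subset_closure (Set.mem_insert_of_mem _ rfl))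
end
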